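/- arXiv:1009.2786 — 3 statements merged into one kernel-verified Lean document; each statement's English description precedes it below -/
import Mathlib

section
/- The minimization problem $\min_y \sum_{i=1}^n (\|b_i - y\| - d_i)^2$ is equivalent to $\min_{y, y_1, \dots, y_n} \sum_{i=1}^n \|y - y_i\|^2$ subject to $\|b_i - y_i\| = d_i$ for all $i$: the optimal values coincide, assuming $y \ne b_i$ for all $i$ at the optimum (more generally, the constrained infimum over $y_i$ for fixed $y$ equals $\sum_i (\|b_i - y\| - d_i)^2$ whenever $y \ne b_i$ for all $i$). -/
/-- For fixed y with y ≠ bᵢ for all i, the constrained infimum of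
∑ ‖y - yᵢ‖² over yᵢ with ‖bᵢ - yᵢ‖ = dᵢ is attained and equals ∑ (‖bᵢ - y‖ - dᵢ)². -/
theorem stmt_7 {n m : ℕ} (b : Fin n → EuclideanSpace ℝ (Fin m)) (d : Fin n → ℝ)
    (hd : ∀ i, 0 < d i) (y : EuclideanSpace ℝ (Fin m)) (hy : ∀ i, y ≠ b i) :
    IsLeast {S : ℝ | ∃ z : Fin n → EuclideanSpace ℝ (Fin m),
        (∀ i, ‖b i - z i‖ = d i) ∧ S = ∑ i, ‖y - z i‖ ^ 2}
      (∑ i, (‖b i - y‖ - d i) ^ 2) := by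
  have hr : ∀ i, 0 < ‖y - b i‖ := fun i => by
    rw [norm_pos_iff, sub_ne_zero]; exact hy i
  constructor
  · refine ⟨fun i => b i + (d i / ‖y - b i‖) • (y - b i), fun i => ?_, ?_⟩
    · have : b i - (b i + (d i / ‖y - b i‖) • (y - b i))
          = -((d i / ‖y - b i‖) • (y - b i)) := by abel
      rw [this, norm_neg, norm_smul, Real.norm_eq_abs,
        abs_of_pos (div_pos (hd i) (hr i))]
      exact div_mul_cancel₀ _ (hr i).ne'
    · refine Finset.sum_congr rfl fun i _ => ?_
      have h1 : y - (b i + (d i / ‖y - b i‖) • (y - b i))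
          = (1 - d i / ‖y - b i‖) • (y - b i) := by
        rw [sub_smul, one_smul]; abel
      rw [h1, norm_smul, Real.norm_eq_abs, mul_pow, sq_abs]
      have h2 : (1 - d i / ‖y - b i‖) * ‖y - b i‖ = ‖y - b i‖ - d i := by
        rw [sub_mul, one_mul, div_mul_cancel₀ _ (hr i).ne']
      have h3 : ‖y - b i‖ = ‖b i - y‖ := by rw [← neg_sub, norm_neg]
      rw [← mul_pow, h2, h3]
  · rintro S ⟨z, hz, rfl⟩
    refine Finset.sum_le_sum fun i _ => ?_
    have h3 : ‖y - b i‖ = ‖b i - y‖ := by rw [← neg_sub, norm_neg]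
    have t1 : ‖y - b i‖ ≤ ‖y - z i‖ + ‖b i - z i‖ := by
      have := norm_sub_le_norm_sub_add_norm_sub y (z i) (b i)
      rw [show z i - b i = -(b i - z i) by abel, norm_neg] at this
      exact this
    have t2 : ‖b i - z i‖ ≤ ‖b i - y‖ + ‖y - z i‖ := norm_sub_le_norm_sub_add_norm_sub _ _ _
    nlinarith [norm_nonneg (y - z i), hz i, hr i]
end

section
/- Let $\Lambda = \mathrm{diag}(\lambda_1,\dots,\lambda_n)$ with $\lambda_i > 0$, $\Pi$ as above, and $\Pi(\sigma) = (\Lambda + \sigma\mathbf{1}\mathbf{1}^T)^{-1}$ for $\sigma > 0$. Then $\|\Pi - \Pi(\sigma)\|_F = \frac{\mathbf{1}^T\Lambda^{-2}\mathbf{1}}{(\mathbf{1}^T\Lambda^{-1}\mathbf{1})(\sigma\,\mathbf{1}^T\Lambda^{-1}\mathbf{1} + 1)}$. -/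
/-!
With `u = Λ⁻¹𝟙` and `s = 𝟙ᵀu`, Sherman–Morrison gives `Π(σ) = Λ⁻¹ - σ / (σ s + 1) • u uᵀ`, while
`Π = Λ⁻¹ - s⁻¹ • u uᵀ`. Hence `Π - Π(σ) = -(s (σ s + 1))⁻¹ • u uᵀ`, a multiple of a rank-one matrix,
and `‖u uᵀ‖_F = ‖u‖² = 𝟙ᵀΛ⁻²𝟙`.
-/

open Matrix

namespace Matrix

variable {ι K : Type*} [Fintype ι]

theorem inv_diagonal_add_smul_ones [DecidableEq ι] [Field K] (d : ι → K) (hd : ∀ i, d i ≠ 0)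
    (σ : K) (hσ : σ * ∑ i, (d i)⁻¹ + 1 ≠ 0) :
    (diagonal d + σ • of fun _ _ => 1)⁻¹ =
      diagonal d⁻¹ - (σ / (σ * ∑ i, (d i)⁻¹ + 1)) • vecMulVec d⁻¹ d⁻¹ := by
  have hJ : (of fun _ _ => 1 : Matrix ι ι K) = vecMulVec 1 1 := by ext; simp [vecMulVec_apply]
  refine inv_eq_right_inv ?_
  rw [hJ, add_mul, mul_sub, mul_sub, diagonal_mul_diagonal, mul_smul_comm, mul_vecMulVec,
    smul_mul, smul_mul, vecMulVec_mul, mul_smul_comm, vecMulVec_mul_vecMulVec]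
  ext i j
  simp only [Pi.inv_apply, hd, ne_eq, not_false_eq_true, mul_inv_cancel₀, diagonal_one,
    one_vecMulVec, dotProduct, Pi.one_apply, one_mul, vecMulVec_smul, add_apply, sub_apply,
    one_apply, smul_apply, vecMulVec_apply, mulVec_diagonal, smul_eq_mul, replicateRow_apply,
    vecMul_diagonal]
  -- what remains besides `1` is `(σ - c (σ s + 1)) • 𝟙 uᵀ`, with `c = σ / (σ s + 1)`
  linear_combination (-(d j)⁻¹) * div_mul_cancel₀ σ hσ

theorem sqrt_sum_sq_smul_vecMulVec_self (c : ℝ) (u : ι → ℝ) :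
    √(∑ i, ∑ j, (c • vecMulVec u u) i j ^ 2) = |c| * ∑ i, u i ^ 2 := by
  have h : ∑ i, ∑ j, (c • vecMulVec u u) i j ^ 2 = (|c| * ∑ i, u i ^ 2) ^ 2 := by
    rw [mul_pow, sq_abs, sq (∑ i, _), Finset.sum_mul_sum, Finset.mul_sum]
    refine Finset.sum_congr rfl fun i _ => ?_
    rw [Finset.mul_sum]
    refine Finset.sum_congr rfl fun j _ => ?_
    rw [smul_apply, vecMulVec_apply, smul_eq_mul]
    ring
  rw [h, Real.sqrt_sq (by positivity)]

end Matrix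

theorem stmt_11_general {n : ℕ} (lam : Fin n → ℝ) (hlam : ∀ i, 0 < lam i)
    (σ : ℝ) (hσ : 0 < σ) :
    (let Pi : Matrix (Fin n) (Fin n) ℝ :=
      Matrix.diagonal (fun i => (lam i)⁻¹) -
        (∑ k, (lam k)⁻¹)⁻¹ • Matrix.of (fun i j => (lam i)⁻¹ * (lam j)⁻¹)
     let Pis : Matrix (Fin n) (Fin n) ℝ :=
      (Matrix.diagonal lam + σ • Matrix.of (fun _ _ : Fin n => (1 : ℝ)))⁻¹
     Real.sqrt (∑ i, ∑ j, (Pi i j - Pis i j) ^ 2) =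
       (∑ i, ((lam i)⁻¹) ^ 2) / ((∑ i, (lam i)⁻¹) * (σ * (∑ i, (lam i)⁻¹) + 1))) := by
  intro Pi Pis
  rcases isEmpty_or_nonempty (Fin n) with hn | hn
  · simp
  set s := ∑ i, (lam i)⁻¹
  have hs : 0 < s := Finset.sum_pos (fun i _ => inv_pos.2 (hlam i)) Finset.univ_nonempty
  have hσs : 0 < σ * s + 1 := by positivity
  have hdiff : Pi - Pis = -(s * (σ * s + 1))⁻¹ • vecMulVec lam⁻¹ lam⁻¹ := by
    change diagonal lam⁻¹ - s⁻¹ • vecMulVec lam⁻¹ lam⁻¹ - (diagonal lam + σ • of fun _ _ => 1)⁻¹ = _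
    rw [inv_diagonal_add_smul_ones lam (fun i => (hlam i).ne') σ hσs.ne', sub_sub_sub_cancel_left,
      ← sub_smul]
    congr 1
    change σ / (σ * s + 1) - s⁻¹ = -(s * (σ * s + 1))⁻¹
    field_simp
    ring
  calc √(∑ i, ∑ j, (Pi i j - Pis i j) ^ 2) = √(∑ i, ∑ j, (Pi - Pis) i j ^ 2) := rfl
    _ = (∑ i, ((lam i)⁻¹) ^ 2) / (s * (σ * s + 1)) := by
      rw [hdiff, sqrt_sum_sq_smul_vecMulVec_self, abs_neg, abs_of_pos (by positivity),
        inv_mul_eq_div]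
      rfl

/-- Frobenius norm of the approximation error:
‖Π - (Λ + σ𝟙𝟙ᵀ)⁻¹‖_F = (𝟙ᵀΛ⁻²𝟙) / ((𝟙ᵀΛ⁻¹𝟙)(σ 𝟙ᵀΛ⁻¹𝟙 + 1)). -/
theorem stmt_11 {n : ℕ} (hn : 0 < n) (lam : Fin n → ℝ) (hlam : ∀ i, 0 < lam i)
    (σ : ℝ) (hσ : 0 < σ) :
    (let Pi : Matrix (Fin n) (Fin n) ℝ :=
      Matrix.diagonal (fun i => (lam i)⁻¹) -
        (∑ k, (lam k)⁻¹)⁻¹ • Matrix.of (fun i j => (lam i)⁻¹ * (lam j)⁻¹)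
     let Pis : Matrix (Fin n) (Fin n) ℝ :=
      (Matrix.diagonal lam + σ • Matrix.of (fun _ _ : Fin n => (1 : ℝ)))⁻¹
     Real.sqrt (∑ i, ∑ j, (Pi i j - Pis i j) ^ 2) =
       (∑ i, ((lam i)⁻¹) ^ 2) / ((∑ i, (lam i)⁻¹) * (σ * (∑ i, (lam i)⁻¹) + 1))) :=
  stmt_11_general lam hlam σ hσ
end

section
/- Fix $d > 0$ and $E_{\max} > d^2$. The function $g(E) = \max\{\, d - \sqrt{E},\ \frac{E - d^2}{\sqrt{E_{\max}} + d} \,\}$ is convex on $[0, E_{\max}]$ and satisfies $g(E) \le |\sqrt{E} - d|$ for all $E \in [0, E_{\max}]$, with equality on $[0, d^2]$ and at $E = E_{\max}$. -/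
/-!
Both branches of `g` are convex (`d - √E` because `√` is concave, the other is affine), so their
maximum is. The affine branch is the chord of `|√E - d|` between `E = d²` and `E = Emax`:
from `E - d² = (√E - d)(√E + d)` it equals `(√E - d)` times `(√E + d) / (√Emax + d) ∈ [0, 1]`,
which gives the bound, and the factor is `1` at `Emax`. On `[0, d²]` the affine branch is
nonpositive while `d - √E = |√E - d|`.
-/

open Real Set

lemma convexOn_const_sub_sqrt (d : ℝ) : ConvexOn ℝ (Ici 0) fun E => d - √E :=
  (convexOn_const d (convex_Ici 0)).sub strictConcaveOn_sqrt.concaveOn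

lemma convexOn_sub_div {s : Set ℝ} (hs : Convex ℝ s) (a c : ℝ) :
    ConvexOn ℝ s fun x => (x - a) / c :=
  ⟨hs, fun x _ y _ u v _ _ huv => le_of_eq <| by
    simp only [smul_eq_mul, div_eq_mul_inv]
    linear_combination (a * c⁻¹) * huv⟩

lemma sub_sq_eq_sqrt_sub_mul_sqrt_add {E : ℝ} (hE : 0 ≤ E) (d : ℝ) :
    E - d ^ 2 = (√E - d) * (√E + d) := by
  nlinarith [sq_sqrt hE]

lemma sub_sq_div_sqrt_add_le_abs {d E Emax : ℝ} (hd : 0 ≤ d) (hE : 0 ≤ E)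
    (hEEmax : E ≤ Emax) :
    (E - d ^ 2) / (√Emax + d) ≤ |√E - d| := by
  have hfactor : (√E + d) / (√Emax + d) ≤ 1 :=
    div_le_one_of_le₀ (by gcongr) (by positivity)
  calc (E - d ^ 2) / (√Emax + d) = (√E - d) * ((√E + d) / (√Emax + d)) := by
        rw [sub_sq_eq_sqrt_sub_mul_sqrt_add hE, mul_div_assoc]
    _ ≤ |√E - d| * ((√E + d) / (√Emax + d)) := by gcongr; exact le_abs_self _
    _ ≤ |√E - d| := mul_le_of_le_one_right (abs_nonneg _) hfactor

lemma abs_sqrt_sub_eq_of_le_sq {d E : ℝ} (hd : 0 ≤ d) (hE : E ≤ d ^ 2) :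
    |√E - d| = d - √E := by
  rw [abs_sub_comm, abs_of_nonneg (sub_nonneg.2 ((sqrt_le_left hd).2 hE))]

lemma sub_sq_div_sqrt_add_self {d E : ℝ} (hE : 0 ≤ E) (h : √E + d ≠ 0) :
    (E - d ^ 2) / (√E + d) = √E - d := by
  rw [sub_sq_eq_sqrt_sub_mul_sqrt_add hE, mul_div_assoc, div_self h, mul_one]

/-- g(E) = max{d - √E, (E - d²)/(√E_max + d)} is convex on [0, E_max],
underestimates |√E - d| there, with equality on [0, d²] and at E_max. -/
theorem stmt_16 (d Emax : ℝ) (hd : 0 < d) (hEmax : d ^ 2 < Emax) :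
    (let g : ℝ → ℝ := fun E => max (d - Real.sqrt E) ((E - d ^ 2) / (Real.sqrt Emax + d))
     ConvexOn ℝ (Set.Icc 0 Emax) g ∧
     (∀ E ∈ Set.Icc (0 : ℝ) Emax, g E ≤ |Real.sqrt E - d|) ∧
     (∀ E ∈ Set.Icc (0 : ℝ) (d ^ 2), g E = |Real.sqrt E - d|) ∧
     g Emax = |Real.sqrt Emax - d|) := by
  intro g
  have hEmax0 : 0 ≤ Emax := (sq_nonneg d).trans hEmax.le
  have hd_le : d ≤ √Emax := (le_sqrt hd.le hEmax0).2 hEmax.le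
  have hden : 0 < √Emax + d := by positivity
  refine ⟨?_, fun E hE => max_le ?_ (sub_sq_div_sqrt_add_le_abs hd.le hE.1 hE.2), ?_, ?_⟩
  · exact ((convexOn_const_sub_sqrt d).subset Icc_subset_Ici_self (convex_Icc 0 Emax)).sup
      (convexOn_sub_div (convex_Icc 0 Emax) _ _)
  · rw [abs_sub_comm]
    exact le_abs_self _
  · rintro E ⟨-, hE⟩
    have hchord : (E - d ^ 2) / (√Emax + d) ≤ d - √E :=
      (div_nonpos_of_nonpos_of_nonneg (by linarith) hden.le).trans
        (sub_nonneg.2 ((sqrt_le_left hd.le).2 hE))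
    exact (max_eq_left hchord).trans (abs_sqrt_sub_eq_of_le_sq hd.le hE).symm
  · change max _ _ = _
    rw [sub_sq_div_sqrt_add_self hEmax0 hden.ne', max_eq_right (by linarith),
      abs_of_nonneg (by linarith)]
end
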